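/- Let μ_I, μ_S, r ∈ ℝ, σ_I, σ_S ∈ ℝ^d with σ_I ≠ σ_S, T > 0, δ, ε ∈ (0,1), and ξ ~ N(0, I_d). Define L = (μ_S − μ_I)T + ((‖σ_I‖² − ‖σ_S‖²)/2)T + √T (σ_S − σ_I)·ξ. If μ_S − μ_I + ‖σ_I‖² − σ_S·σ_I ≤ −(z_{δ/2} + z_ε)‖σ_S − σ_I‖/√T, then P( |L + (‖σ_S − σ_I‖²/2)T| < z_{δ/2}‖σ_S − σ_I‖√T ) ≤ ε. -/

import Mathlib

open MeasureTheory ProbabilityTheory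

/-- The standard Gaussian measure `N(0, I_d)` on `EuclideanSpace ℝ (Fin d)`. -/
noncomputable def stdGaussian (d : ℕ) : Measure (EuclideanSpace ℝ (Fin d)) :=
  (Measure.pi fun _ : Fin d => gaussianReal 0 1).map
    (EuclideanSpace.equiv (Fin d) ℝ).symm

/-- The standard normal distribution function `F`. -/
noncomputable def stdNormalCDF (x : ℝ) : ℝ := ((gaussianReal 0 1) (Set.Iic x)).toReal

/-! On the event in question the drift condition forces `⟪σS - σI, ξ⟫ > z_ε ‖σS - σI‖`.
For a standard Gaussian `ξ` and `v ≠ 0`, `⟪v, ξ⟫ / ‖v‖` is standard normal, so this larger event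
has probability exactly `ε`. -/

open Set
open scoped RealInnerProductSpace

theorem stdGaussian_eq_stdGaussian_euclideanSpace (d : ℕ) :
    _root_.stdGaussian d = ProbabilityTheory.stdGaussian (EuclideanSpace ℝ (Fin d)) :=
  map_pi_eq_stdGaussian

theorem gaussianReal_Ioi_eq_Ici (z : ℝ) : gaussianReal 0 1 (Ioi z) = gaussianReal 0 1 (Ici z) :=
  have := nullSingletonClass_gaussianReal (μ := 0) one_ne_zero
  measure_congr Ioi_ae_eq_Ici

section InnerProductSpace

variable {E : Type*} [NormedAddCommGroup E] [InnerProductSpace ℝ E] [FiniteDimensional ℝ E]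
  [MeasurableSpace E] [BorelSpace E]

theorem stdGaussian_map_inner (v : E) :
    (ProbabilityTheory.stdGaussian E).map (fun x => ⟪v, x⟫) = gaussianReal 0 (‖v‖₊ ^ 2) := by
  have hlaw := IsGaussian.map_eq_gaussianReal (μ := ProbabilityTheory.stdGaussian E) (innerSL ℝ v)
  rwa [integral_strongDual_stdGaussian, variance_dual_stdGaussian, innerSL_apply_norm,
    ← coe_nnnorm, ← NNReal.coe_pow, Real.toNNReal_coe] at hlaw

theorem stdGaussian_mul_norm_lt_inner {v : E} (hv : v ≠ 0) (z : ℝ) :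
    ProbabilityTheory.stdGaussian E {x | z * ‖v‖ < ⟪v, x⟫} = gaussianReal 0 1 (Ioi z) := by
  set u := ‖v‖⁻¹ • v
  have hu : ‖u‖₊ = 1 := by
    ext; simp [u, norm_smul, norm_ne_zero_iff.mpr hv]
  have hset : {x | z * ‖v‖ < ⟪v, x⟫} = (fun x => ⟪u, x⟫) ⁻¹' Ioi z := by
    ext x
    simp [u, real_inner_smul_left, lt_inv_mul_iff₀ (norm_pos_iff.mpr hv), mul_comm z]
  rw [hset, ← Measure.map_apply (by fun_prop) measurableSet_Ioi, stdGaussian_map_inner, hu,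
    one_pow]

end InnerProductSpace

theorem lt_of_abs_add_mul_lt {m s x a b c : ℝ} (hs : 0 < s) (hm : m ≤ -((a + b) * c * s))
    (h : |m + s * x| < a * c * s) : b * c < x :=
  lt_of_mul_lt_mul_left (by linarith [neg_abs_le (m + s * x)]) hs.le

theorem stmt7_general {d : ℕ} (μI μS T ε : ℝ) (hT : 0 < T)
    (σI σS : EuclideanSpace ℝ (Fin d)) (hne : σI ≠ σS)
    (zδ2 zε : ℝ)
    (hz2 : ((gaussianReal 0 1) (Set.Ici zε)).toReal = ε)
    (h : μS - μI + ‖σI‖ ^ 2 - (inner ℝ σS σI : ℝ)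
        ≤ -((zδ2 + zε) * ‖σS - σI‖ / Real.sqrt T)) :
    ((stdGaussian d) {ξ |
        |((μS - μI) * T + ((‖σI‖ ^ 2 - ‖σS‖ ^ 2) / 2) * T
            + Real.sqrt T * (inner ℝ (σS - σI) ξ : ℝ))
          + (‖σS - σI‖ ^ 2 / 2) * T|
        < zδ2 * ‖σS - σI‖ * Real.sqrt T}).toReal ≤ ε := by
  rw [stdGaussian_eq_stdGaussian_euclideanSpace]
  set v := σS - σI
  have hv : v ≠ 0 := sub_ne_zero.mpr hne.symm
  have hdrift : (μS - μI) * T + ((‖σI‖ ^ 2 - ‖σS‖ ^ 2) / 2) * T + (‖v‖ ^ 2 / 2) * T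
      ≤ -((zδ2 + zε) * ‖v‖ * √T) :=
    calc _ = T * (μS - μI + ‖σI‖ ^ 2 - ⟪σS, σI⟫) := by rw [norm_sub_sq_real]; ring
      _ ≤ T * -((zδ2 + zε) * ‖v‖ / √T) := mul_le_mul_of_nonneg_left h hT.le
      _ = -((zδ2 + zε) * ‖v‖ * (T / √T)) := by ring
      _ = -((zδ2 + zε) * ‖v‖ * √T) := by rw [Real.div_sqrt]
  have hevent : {ξ | |(μS - μI) * T + ((‖σI‖ ^ 2 - ‖σS‖ ^ 2) / 2) * T + √T * ⟪v, ξ⟫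
        + (‖v‖ ^ 2 / 2) * T| < zδ2 * ‖v‖ * √T} ⊆ {ξ | zε * ‖v‖ < ⟪v, ξ⟫} := by
    intro ξ hξ
    rw [mem_ofPred_eq, add_right_comm] at hξ
    exact lt_of_abs_add_mul_lt (Real.sqrt_pos.mpr hT) hdrift hξ
  calc _ ≤ (ProbabilityTheory.stdGaussian _ {ξ | zε * ‖v‖ < ⟪v, ξ⟫}).toReal :=
        ENNReal.toReal_mono (measure_ne_top _ _) (measure_mono hevent)
    _ = ε := by
      rw [stdGaussian_mul_norm_lt_inner hv, gaussianReal_Ioi_eq_Ici, hz2]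

theorem stmt7 {d : ℕ} (μI μS r T δ ε : ℝ) (hT : 0 < T)
    (hδ : δ ∈ Set.Ioo (0 : ℝ) 1) (hε : ε ∈ Set.Ioo (0 : ℝ) 1)
    (σI σS : EuclideanSpace ℝ (Fin d)) (hne : σI ≠ σS)
    (zδ2 zε : ℝ)
    (hz1 : ((gaussianReal 0 1) (Set.Ici zδ2)).toReal = δ / 2)
    (hz2 : ((gaussianReal 0 1) (Set.Ici zε)).toReal = ε)
    (h : μS - μI + ‖σI‖ ^ 2 - (inner ℝ σS σI : ℝ)
        ≤ -((zδ2 + zε) * ‖σS - σI‖ / Real.sqrt T)) :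
    ((stdGaussian d) {ξ |
        |((μS - μI) * T + ((‖σI‖ ^ 2 - ‖σS‖ ^ 2) / 2) * T
            + Real.sqrt T * (inner ℝ (σS - σI) ξ : ℝ))
          + (‖σS - σI‖ ^ 2 / 2) * T|
        < zδ2 * ‖σS - σI‖ * Real.sqrt T}).toReal ≤ ε :=
  stmt7_general μI μS T ε hT σI σS hne zδ2 zε hz2 h
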